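/- arXiv:2411.16355 — 5 statements merged into one kernel-verified Lean document; each statement's English description precedes it below -/
import Mathlib

section
/- If an execution satisfies serial consistency (for every event o of process i, the set of events serialized before o in ser_i equals the set of events visible to o), together with well-formedness (physical realizability of vis, and each ser_i a strict total order with a vis b_i → a ser_i b_i for b_i of process i), then it satisfies local visibility: a po b implies a vis b. -/
theorem stmt_1_general {E I : Type} (pr : E → I) (po vis : E → E → Prop)
    (ser : I → E → E → Prop)
    (hpo_proc : ∀ a b, po a b → pr a = pr b)
    (hpo_irrefl : ∀ a, ¬ po a a)
    (hser_total : ∀ i a b, a ≠ b → ser i a b ∨ ser i b a)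
    (hpr : ∀ a b, Relation.TransGen (fun x y => po x y ∨ vis x y) a b → ¬ po b a)
    (hserial : ∀ o x, ser (pr o) x o ↔ vis x o) :
    ∀ a b, po a b → vis a b := by
  intro a b hab
  have hne : a ≠ b := fun h => hpo_irrefl a (h ▸ hab)
  rcases hser_total (pr b) a b hne with hser_ab | hser_ba
  · exact (hserial b a).mp hser_ab
  · have hvis_ba : vis b a := (hserial a b).mp (hpo_proc a b hab ▸ hser_ba)
    exact (hpr b a (.single (.inr hvis_ba)) hab).elim

/-- Serial consistency plus well-formedness implies local visibility. -/
theorem stmt_1 {E I : Type} (pr : E → I) (po vis : E → E → Prop)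
    (ser : I → E → E → Prop)
    (hpo_proc : ∀ a b, po a b → pr a = pr b)
    (hpo_irrefl : ∀ a, ¬ po a a)
    (hpo_trans : ∀ a b c, po a b → po b c → po a c)
    (hpo_total : ∀ a b, pr a = pr b → a ≠ b → po a b ∨ po b a)
    (hser_irrefl : ∀ i a, ¬ ser i a a)
    (hser_trans : ∀ i a b c, ser i a b → ser i b c → ser i a c)
    (hser_total : ∀ i a b, a ≠ b → ser i a b ∨ ser i b a)
    (hpr : ∀ a b, Relation.TransGen (fun x y => po x y ∨ vis x y) a b → ¬ po b a)
    (hser_vis : ∀ a b, vis a b → ser (pr b) a b)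
    (hserial : ∀ o x, ser (pr o) x o ↔ vis x o) :
    ∀ a b, po a b → vis a b :=
  stmt_1_general pr po vis ser hpo_proc hpo_irrefl hser_total hpr hserial
end

section
/- If a well-formed execution satisfies serial consistency, then it satisfies monotonic visibility: for all events a, b, c, if a vis b and b po c then a vis c. -/
/-! Serial consistency makes the events visible to an event of process `i` a down-set of the strict
total order `ser i`, and down-sets of a total order are nested. So if `a vis b`, `b po c` and not
`a vis c`, then `c vis b`, which physical realizability forbids. -/

theorem lt_or_lt_of_lt_of_trans_of_total {α : Type*} {r : α → α → Prop}
    (htrans : ∀ a b c, r a b → r b c → r a c) (htotal : ∀ a b, a ≠ b → r a b ∨ r b a)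
    {a b : α} (hab : r a b) (c : α) : r a c ∨ r c b := by
  by_cases hac : a = c
  · exact Or.inr (hac ▸ hab)
  · exact (htotal a c hac).imp_right fun hca => htrans c a b hca hab

theorem vis_or_vis_of_serial {E I : Type*} {pr : E → I} {vis : E → E → Prop}
    {ser : I → E → E → Prop}
    (hser_trans : ∀ i a b c, ser i a b → ser i b c → ser i a c)
    (hser_total : ∀ i a b, a ≠ b → ser i a b ∨ ser i b a)
    (hserial : ∀ o x, ser (pr o) x o ↔ vis x o)
    {a b c : E} (hab : vis a b) (hbc : pr b = pr c) : vis a c ∨ vis c b := by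
  rcases lt_or_lt_of_lt_of_trans_of_total (hser_trans (pr b)) (hser_total (pr b))
      ((hserial b a).2 hab) c with hac | hcb
  · exact Or.inl ((hserial c a).1 (hbc ▸ hac))
  · exact Or.inr ((hserial b c).1 hcb)

theorem stmt_2_general {E I : Type} (pr : E → I) (po vis : E → E → Prop)
    (ser : I → E → E → Prop)
    (hpo_proc : ∀ a b, po a b → pr a = pr b)
    (hser_trans : ∀ i a b c, ser i a b → ser i b c → ser i a c)
    (hser_total : ∀ i a b, a ≠ b → ser i a b ∨ ser i b a)
    (hpr : ∀ a b, Relation.TransGen (fun x y => po x y ∨ vis x y) a b → ¬ po b a)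
    (hserial : ∀ o x, ser (pr o) x o ↔ vis x o) :
    ∀ a b c, vis a b → po b c → vis a c := by
  intro a b c hab hbc
  rcases vis_or_vis_of_serial hser_trans hser_total hserial hab (hpo_proc b c hbc) with hac | hcb
  · exact hac
  · exact absurd hbc (hpr c b (.single (.inr hcb)))

/-- Serial consistency plus well-formedness implies monotonic visibility. -/
theorem stmt_2 {E I : Type} (pr : E → I) (po vis : E → E → Prop)
    (ser : I → E → E → Prop)
    (hpo_proc : ∀ a b, po a b → pr a = pr b)
    (hpo_irrefl : ∀ a, ¬ po a a)
    (hpo_trans : ∀ a b c, po a b → po b c → po a c)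
    (hser_irrefl : ∀ i a, ¬ ser i a a)
    (hser_trans : ∀ i a b c, ser i a b → ser i b c → ser i a c)
    (hser_total : ∀ i a b, a ≠ b → ser i a b ∨ ser i b a)
    (hpr : ∀ a b, Relation.TransGen (fun x y => po x y ∨ vis x y) a b → ¬ po b a)
    (hser_vis : ∀ a b, vis a b → ser (pr b) a b)
    (hserial : ∀ o x, ser (pr o) x o ↔ vis x o) :
    ∀ a b c, vis a b → po b c → vis a c :=
  stmt_2_general pr po vis ser hpo_proc hser_trans hser_total hpr hserial
end

section
/- If an execution satisfies sequential consistency (vis is a strict total order containing po, and ser_i = vis for every process i), then it satisfies causal consistency: it satisfies causal visibility (hb ⊆ vis), causal serializations (a hb b ∧ ¬(b hb a) → a ser_i b), and serial consistency ({x | x ser_i o} = {x | x vis o} for every event o of process i). -/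
theorem Relation.transGen_or_le_of_le {α : Type*} {r s : α → α → Prop} [IsTrans α s]
    (hrs : r ≤ s) : Relation.TransGen (fun x y => r x y ∨ s x y) ≤ s :=
  Relation.transGen_minimal fun x y hxy => hxy.elim (hrs x y) id

theorem stmt_7_general {E I : Type} (pr : E → I) (po vis : E → E → Prop)
    (ser : I → E → E → Prop)
    (hvis_trans : ∀ a b c, vis a b → vis b c → vis a c)
    (hpo_sub : ∀ a b, po a b → vis a b)
    (hser_eq : ∀ i : I, ser i = vis) :
    -- causal visibility
    (∀ a b, Relation.TransGen (fun x y => po x y ∨ vis x y) a b → vis a b) ∧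
    -- causal serializations
    (∀ (i : I) a b, Relation.TransGen (fun x y => po x y ∨ vis x y) a b →
      ¬ Relation.TransGen (fun x y => po x y ∨ vis x y) b a → ser i a b) ∧
    -- serial consistency
    (∀ o x, ser (pr o) x o ↔ vis x o) := by
  have : IsTrans E vis := ⟨hvis_trans⟩
  have hb_vis : ∀ a b, Relation.TransGen (fun x y => po x y ∨ vis x y) a b → vis a b :=
    Relation.transGen_or_le_of_le hpo_sub
  refine ⟨hb_vis, fun i a b hab _ => ?_, fun o x => ?_⟩
  · rw [hser_eq]
    exact hb_vis a b hab
  · rw [hser_eq]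

/-- Sequential consistency implies causal consistency
(causal visibility, causal serializations, and serial consistency). -/
theorem stmt_7 {E I : Type} (pr : E → I) (po vis : E → E → Prop)
    (ser : I → E → E → Prop)
    (hpo_proc : ∀ a b, po a b → pr a = pr b)
    (hpo_irrefl : ∀ a, ¬ po a a)
    (hpo_trans : ∀ a b c, po a b → po b c → po a c)
    (hpr : ∀ a b, Relation.TransGen (fun x y => po x y ∨ vis x y) a b → ¬ po b a)
    (hser_vis : ∀ a b, vis a b → ser (pr b) a b)
    -- sequential consistency: vis strict total order containing po, ser_i = vis
    (hvis_irrefl : ∀ a, ¬ vis a a)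
    (hvis_trans : ∀ a b c, vis a b → vis b c → vis a c)
    (hvis_total : ∀ a b, a ≠ b → vis a b ∨ vis b a)
    (hpo_sub : ∀ a b, po a b → vis a b)
    (hser_eq : ∀ i : I, ser i = vis) :
    -- causal visibility
    (∀ a b, Relation.TransGen (fun x y => po x y ∨ vis x y) a b → vis a b) ∧
    -- causal serializations
    (∀ (i : I) a b, Relation.TransGen (fun x y => po x y ∨ vis x y) a b →
      ¬ Relation.TransGen (fun x y => po x y ∨ vis x y) b a → ser i a b) ∧
    -- serial consistency
    (∀ o x, ser (pr o) x o ↔ vis x o) :=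
  stmt_7_general pr po vis ser hvis_trans hpo_sub hser_eq
end

section
/- An execution satisfies sequential consistency if and only if it satisfies serial consistency and arbitration. That is, given a well-formed execution (physical realizability and serialization of visibility hold), the conjunction of serial consistency ({x | x ser_i o} = {x | x vis o} for every event o of process i) and arbitration (all ser_i equal) is equivalent to sequential consistency (vis is a strict total order, po ⊆ vis, and ser_i = vis for all i). -/
theorem ser_eq_vis_of_serialConsistency_of_arbitration {E I : Type} {pr : E → I}
    {ser : I → E → E → Prop} {vis : E → E → Prop} (hsc : ∀ o x, ser (pr o) x o ↔ vis x o)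
    (harb : ∀ i j, ser i = ser j) (i : I) : ser i = vis := by
  funext x o
  rw [harb i (pr o)]
  exact propext (hsc o x)

theorem rel_of_total_of_not_rel_flip {α : Type*} {r s : α → α → Prop} (hr : ∀ a, ¬ r a a)
    (hs : ∀ a b, a ≠ b → s a b ∨ s b a) (hrs : ∀ a b, r a b → ¬ s b a)
    {a b : α} (hab : r a b) : s a b := by
  have hne : a ≠ b := by
    rintro rfl
    exact hr a hab
  exact (hs a b hne).resolve_right (hrs a b hab)

theorem stmt_10_general {E I : Type} (pr : E → I) (po vis : E → E → Prop)
    (ser : I → E → E → Prop)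
    (hpo_irrefl : ∀ a, ¬ po a a)
    (hser_trans : ∀ i a b c, ser i a b → ser i b c → ser i a c)
    (hser_total : ∀ i a b, a ≠ b → ser i a b ∨ ser i b a)
    (hpr : ∀ a b, Relation.TransGen (fun x y => po x y ∨ vis x y) a b → ¬ po b a) :
    -- serial consistency ∧ arbitration ↔ sequential consistency
    ((∀ o x, ser (pr o) x o ↔ vis x o) ∧ (∀ i j : I, ser i = ser j)) ↔
    ((∀ a b c, vis a b → vis b c → vis a c) ∧
     (∀ a b, a ≠ b → vis a b ∨ vis b a) ∧
     (∀ a b, po a b → vis a b) ∧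
     (∀ i : I, ser i = vis)) := by
  constructor
  · rintro ⟨hsc, harb⟩
    have hser := ser_eq_vis_of_serialConsistency_of_arbitration hsc harb
    have hvis_total : ∀ a b, a ≠ b → vis a b ∨ vis b a :=
      fun a b => hser (pr a) ▸ hser_total _ a b
    -- a `vis` edge against `po` would close a cycle in `po ∪ vis`
    have hpo_vis : ∀ a b, po a b → ¬ vis b a :=
      fun a b hab hba => hpr b a (.single (.inr hba)) hab
    exact ⟨fun a b c => hser (pr a) ▸ hser_trans _ a b c, hvis_total,
      fun _ _ => rel_of_total_of_not_rel_flip hpo_irrefl hvis_total hpo_vis, hser⟩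
  · rintro ⟨-, -, -, hser⟩
    exact ⟨fun o x => by rw [hser], fun i j => by rw [hser, hser]⟩

/-- For a well-formed execution, sequential consistency is
equivalent to serial consistency plus arbitration. -/
theorem stmt_10 {E I : Type} (pr : E → I) (po vis : E → E → Prop)
    (ser : I → E → E → Prop)
    (hpo_proc : ∀ a b, po a b → pr a = pr b)
    (hpo_irrefl : ∀ a, ¬ po a a)
    (hpo_trans : ∀ a b c, po a b → po b c → po a c)
    (hpo_total : ∀ a b, pr a = pr b → a ≠ b → po a b ∨ po b a)
    (hvis_irrefl : ∀ a, ¬ vis a a)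
    (hser_irrefl : ∀ i a, ¬ ser i a a)
    (hser_trans : ∀ i a b c, ser i a b → ser i b c → ser i a c)
    (hser_total : ∀ i a b, a ≠ b → ser i a b ∨ ser i b a)
    (hpr : ∀ a b, Relation.TransGen (fun x y => po x y ∨ vis x y) a b → ¬ po b a)
    (hser_vis : ∀ a b, vis a b → ser (pr b) a b) :
    -- serial consistency ∧ arbitration ↔ sequential consistency
    ((∀ o x, ser (pr o) x o ↔ vis x o) ∧ (∀ i j : I, ser i = ser j)) ↔
    ((∀ a b c, vis a b → vis b c → vis a c) ∧
     (∀ a b, a ≠ b → vis a b ∨ vis b a) ∧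
     (∀ a b, po a b → vis a b) ∧
     (∀ i : I, ser i = vis)) :=
  stmt_10_general pr po vis ser hpo_irrefl hser_trans hser_total hpr
end

section
/- CLAM theorem (abstract form): Let an execution over two processes i and j consist of: an update u_i followed by queries at process i, and an update u_j followed by queries at process j, where under the partitioned visibility vis₀ (no cross-process visibility edges) all results are valid, and (u_i, u_j) is an irredundant pair (adding visibility edges from u_i to all events of j that see u_j, when u_i is serialized before u_j, breaks result validity; symmetrically for u_j before u_i). Then no visibility relation vis ⊇ vis₀ and serializations can simultaneously satisfy local visibility, monotonic visibility, closed past, arbitration, result validity, and the constraint that vis adds no information flow altering results (i.e., the queries' results are those determined by vis₀). -/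
/-!
Whichever way the common serialization orders the two updates, closed past forces the earlier
one to be visible to every event that follows the later one in program order, which is exactly
the extra visibility that irredundancy declares incompatible with valid results.
-/

theorem vis_of_ser_of_po {E I : Type*} {pr : E → I} {po vis : E → E → Prop}
    {ser : I → E → E → Prop} (hirrefl : ∀ p a, ¬ ser p a a)
    (htrans : ∀ p a b c, ser p a b → ser p b c → ser p a c)
    (hloc : ∀ a b, po a b → vis a b)
    (hclosed : ∀ a b c, vis a b → ¬ vis c b → ser (pr b) a c)
    {u v c : E} (hser : ser (pr c) v u) (hpo : po u c) : vis v c := by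
  by_contra hnv
  exact hirrefl _ v (htrans _ _ _ _ hser (hclosed u c v (hloc u c hpo) hnv))

theorem stmt_16_general {E I : Type} (pr : E → I) (i j : I) (hij : i ≠ j)
    (po : E → E → Prop) (vis0 : E → E → Prop)
    (ResValid : (E → E → Prop) → (I → E → E → Prop) → Prop)
    (u_i u_j : E) (hui : pr u_i = i) (huj : pr u_j = j)
    -- program order relates only events of the same process
    (hpo_proc : ∀ a b, po a b → pr a = pr b)
    -- (u_i, u_j) is an irredundant pair: making the other update visible to all
    -- local viewers of the one serialized after it breaks result validity
    (hirr : ∀ (vis : E → E → Prop) (ser : I → E → E → Prop),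
      (∀ a b, vis0 a b → vis a b) →
      ((ser j u_i u_j ∧ ∀ c, po u_j c → vis u_i c) ∨
       (ser i u_j u_i ∧ ∀ c, po u_i c → vis u_j c)) →
      ¬ ResValid vis ser) :
    ¬ ∃ (vis : E → E → Prop) (ser : I → E → E → Prop),
      (∀ a b, vis0 a b → vis a b) ∧
      -- serializations are strict total orders
      (∀ p a, ¬ ser p a a) ∧
      (∀ p a b c, ser p a b → ser p b c → ser p a c) ∧
      (∀ p a b, a ≠ b → ser p a b ∨ ser p b a) ∧
      -- serialization of visibility
      (∀ a b, vis a b → ser (pr b) a b) ∧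
      -- local visibility
      (∀ a b, po a b → vis a b) ∧
      -- monotonic visibility
      (∀ a b c, vis a b → po b c → vis a c) ∧
      -- closed past
      (∀ a b c, vis a b → ¬ vis c b → ser (pr b) a c) ∧
      -- arbitration
      (∀ p q : I, ser p = ser q) ∧
      -- result validity
      ResValid vis ser := by
  rintro ⟨vis, ser, hext, hirrefl, htrans, htotal, -, hloc, -, hclosed, harb, hres⟩
  refine hirr vis ser hext ?_ hres
  have hvis : ∀ {u v c}, ser (pr c) v u → po u c → vis v c :=
    vis_of_ser_of_po hirrefl htrans hloc hclosed
  have hne : u_i ≠ u_j := by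
    rintro rfl
    exact hij (hui ▸ huj)
  rcases htotal j u_i u_j hne with hser | hser
  · refine .inl ⟨hser, fun c hc => hvis ?_ hc⟩
    rwa [← hpo_proc _ _ hc, huj]
  · replace hser : ser i u_j u_i := harb i j ▸ hser
    refine .inr ⟨hser, fun c hc => hvis ?_ hc⟩
    rwa [← hpo_proc _ _ hc, hui]

/-- CLAM theorem, abstract form: for a two-process partitioned
execution with an irredundant pair of updates, no visibility extending the
partitioned visibility and no serializations can simultaneously satisfy local
visibility, monotonic visibility, closed past, arbitration, and result
validity. -/
theorem stmt_16 {E I : Type} (pr : E → I) (i j : I) (hij : i ≠ j)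
    (po : E → E → Prop) (vis0 : E → E → Prop)
    (ResValid : (E → E → Prop) → (I → E → E → Prop) → Prop)
    (u_i u_j : E) (hui : pr u_i = i) (huj : pr u_j = j)
    -- program order relates only events of the same process
    (hpo_proc : ∀ a b, po a b → pr a = pr b)
    -- each update is followed by at least one query at its process
    (hq_i : ∃ q, po u_i q) (hq_j : ∃ q, po u_j q)
    -- partitioned visibility: no cross-process edges
    (hpart : ∀ a b, vis0 a b → pr a = pr b)
    -- under the partitioned run all results are valid, whatever the serializations
    (hvalid0 : ∀ ser : I → E → E → Prop, ResValid vis0 ser)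
    -- (u_i, u_j) is an irredundant pair: making the other update visible to all
    -- local viewers of the one serialized after it breaks result validity
    (hirr : ∀ (vis : E → E → Prop) (ser : I → E → E → Prop),
      (∀ a b, vis0 a b → vis a b) →
      ((ser j u_i u_j ∧ ∀ c, po u_j c → vis u_i c) ∨
       (ser i u_j u_i ∧ ∀ c, po u_i c → vis u_j c)) →
      ¬ ResValid vis ser) :
    ¬ ∃ (vis : E → E → Prop) (ser : I → E → E → Prop),
      (∀ a b, vis0 a b → vis a b) ∧
      -- serializations are strict total orders
      (∀ p a, ¬ ser p a a) ∧
      (∀ p a b c, ser p a b → ser p b c → ser p a c) ∧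
      (∀ p a b, a ≠ b → ser p a b ∨ ser p b a) ∧
      -- serialization of visibility
      (∀ a b, vis a b → ser (pr b) a b) ∧
      -- local visibility
      (∀ a b, po a b → vis a b) ∧
      -- monotonic visibility
      (∀ a b c, vis a b → po b c → vis a c) ∧
      -- closed past
      (∀ a b c, vis a b → ¬ vis c b → ser (pr b) a c) ∧
      -- arbitration
      (∀ p q : I, ser p = ser q) ∧
      -- result validity
      ResValid vis ser :=
  stmt_16_general pr i j hij po vis0 ResValid u_i u_j hui huj hpo_proc hirr
end
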